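/- Let (X_i)_{i≥1} be i.i.d. ℤ^d-valued random variables whose random walk has escape probability γ ∈ (0,1). Then for every real α ≥ 0, lim_{n→∞} E(L_n(α))/n = Σ_{j=1}^∞ j^α γ² (1−γ)^{j−1}. -/

import Mathlib

open MeasureTheory ProbabilityTheory Filter Topology

/-- The random walk: `S 0 = 0` and `S n = X 1 + ⋯ + X n` (steps indexed from `0`). -/
def walk {Ω : Type*} {d : ℕ} (X : ℕ → Ω → (Fin d → ℤ)) (n : ℕ) (ω : Ω) : Fin d → ℤ :=
  ∑ i ∈ Finset.range n, X i ω

/-- The local time `ℓ(n,x) = #{0 ≤ i ≤ n : S i = x}`. -/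
def localTime {Ω : Type*} {d : ℕ} (X : ℕ → Ω → (Fin d → ℤ)) (n : ℕ) (x : Fin d → ℤ)
    (ω : Ω) : ℕ :=
  ((Finset.range (n + 1)).filter fun i => walk X i ω = x).card

/-- The set of points visited by time `n`. -/
def visited {Ω : Type*} {d : ℕ} (X : ℕ → Ω → (Fin d → ℤ)) (n : ℕ) (ω : Ω) :
    Finset (Fin d → ℤ) :=
  (Finset.range (n + 1)).image fun i => walk X i ω

/-- The steps are i.i.d.: measurable, independent and identically distributed. -/
def IID {Ω : Type*} {d : ℕ} [MeasurableSpace Ω] (P : Measure Ω)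
    (X : ℕ → Ω → (Fin d → ℤ)) : Prop :=
  (∀ i, Measurable (X i)) ∧ iIndepFun X P ∧
    ∀ i, IdentDistrib (X i) (X 0) P P

/-- `L_n(α) = ∑_{x ∈ ℤ^d} ℓ(n,x)^α`, with the convention `0^0 = 0`, so that the sum may be
restricted to the (finitely many) visited points, where the local time is positive. -/
noncomputable def Lfun {Ω : Type*} {d : ℕ} (X : ℕ → Ω → (Fin d → ℤ)) (α : ℝ) (n : ℕ)
    (ω : Ω) : ℝ :=
  ∑ x ∈ visited X n ω, (localTime X n x ω : ℝ) ^ α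

/-!
Every visited point is first reached at a unique time `i`, and its local time is then one plus
the number of returns to the starting point of the walk restarted at time `i`, counted over the
remaining `n - i` steps. The steps before and after `i` are independent, so
`E L_n(α) = ∑_{i ≤ n} q_i e_{n-i}` with `q_i = P(S_i is a new point)` and
`e_m = E (R_m + 1)^α`, `R_m` being the number of returns by time `m`. Reversing the first `i`
steps turns "new point at time `i`" into "no return by time `i`", so `q_i → γ`. Splitting at
the first return shows that the total number of returns is geometric,
`P(R_∞ ≥ j) = (1 - γ)^j`, whence `e_m → ∑_j (j + 1)^α γ (1 - γ)^j` by dominated convergence,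
and a Cesàro argument for the convolution gives the limit `γ · lim e_m`.
-/

open Function

namespace RandomWalk

lemma summable_add_one_rpow_mul_geometric (α : ℝ) {r : ℝ} (h0 : 0 ≤ r) (h1 : r < 1) :
    Summable fun j : ℕ => ((j : ℝ) + 1) ^ α * r ^ j := by
  obtain ⟨K, hK⟩ := exists_nat_ge α
  -- `r` may vanish, so compare with the shifted series for a larger ratio `s > 0`.
  obtain ⟨s, hrs, hs1⟩ := exists_between h1
  have hs0 : 0 < s := h0.trans_lt hrs
  have hshift : Summable fun j : ℕ => ((j : ℝ) + 1) ^ K * s ^ j := by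
    have := ((summable_nat_add_iff 1).2 (summable_pow_mul_geometric_of_norm_lt_one K
      (r := s) (by rwa [Real.norm_of_nonneg hs0.le]))).mul_left s⁻¹
    refine this.congr fun j => ?_
    push_cast
    rw [pow_succ]
    field_simp
  refine hshift.of_nonneg_of_le (fun j => by positivity) fun j => ?_
  gcongr
  calc ((j : ℝ) + 1) ^ α ≤ ((j : ℝ) + 1) ^ (K : ℝ) :=
        Real.rpow_le_rpow_of_exponent_le (by linarith [j.cast_nonneg (α := ℝ)]) hK
    _ = ((j : ℝ) + 1) ^ K := Real.rpow_natCast _ K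

lemma tendsto_sum_range_succ_div {c : ℕ → ℝ} {C : ℝ} (h : Tendsto c atTop (𝓝 C)) :
    Tendsto (fun n : ℕ => (∑ i ∈ Finset.range (n + 1), c i) / n) atTop (𝓝 C) := by
  have hratio : Tendsto (fun n : ℕ => ((n : ℝ) + 1) / n) atTop (𝓝 1) := by
    simpa using (tendsto_natCast_div_add_atTop (1 : ℝ)).inv₀ one_ne_zero
  have := hratio.mul (h.cesaro.comp (tendsto_add_atTop_nat 1))
  rw [one_mul] at this
  refine this.congr fun n => ?_
  rcases eq_or_ne n 0 with rfl | hn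
  · simp
  · have : (n : ℝ) + 1 ≠ 0 := by positivity
    simp only [comp_apply, Nat.cast_add, Nat.cast_one]
    field_simp

lemma tendsto_sum_mul_sub_div {a b : ℕ → ℝ} {A B : ℝ} (ha : Tendsto a atTop (𝓝 A))
    (hb : Tendsto b atTop (𝓝 B)) :
    Tendsto (fun n : ℕ => (∑ i ∈ Finset.range (n + 1), a i * b (n - i)) / n) atTop
      (𝓝 (A * B)) := by
  obtain ⟨C, hC⟩ := hb.abs.bddAbove_range
  have hbC : ∀ i, |b i| ≤ C := fun i => hC ⟨i, rfl⟩
  have hsplit : ∀ n : ℕ, (∑ i ∈ Finset.range (n + 1), a i * b (n - i)) / n =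
      (∑ i ∈ Finset.range (n + 1), (a i - A) * b (n - i)) / n +
        A * ((∑ i ∈ Finset.range (n + 1), b i) / n) := fun n => by
    rw [← Finset.sum_range_reflect b, mul_div_assoc', ← add_div, Finset.mul_sum,
      ← Finset.sum_add_distrib]
    congr 1
    refine Finset.sum_congr rfl fun i _ => ?_
    rw [show n + 1 - 1 - i = n - i by omega]
    ring
  have herr : Tendsto (fun n : ℕ => (∑ i ∈ Finset.range (n + 1), (a i - A) * b (n - i)) / n)
      atTop (𝓝 0) := by
    have hdev := (tendsto_sum_range_succ_div ((ha.sub_const A).abs)).const_mul C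
    rw [sub_self, abs_zero, mul_zero] at hdev
    refine squeeze_zero_norm (fun n => ?_) hdev
    simp only [norm_div, Real.norm_eq_abs, Nat.abs_cast]
    rw [mul_div_assoc', Finset.mul_sum]
    gcongr
    refine (Finset.abs_sum_le_sum_abs _ _).trans (Finset.sum_le_sum fun i _ => ?_)
    rw [abs_mul, mul_comm]
    exact mul_le_mul_of_nonneg_right (hbC _) (abs_nonneg _)
  simpa [hsplit] using herr.add ((tendsto_sum_range_succ_div hb).const_mul A)

variable {Ω : Type*} {d : ℕ}

def shift (X : ℕ → Ω → (Fin d → ℤ)) (i : ℕ) : ℕ → Ω → (Fin d → ℤ) := fun k => X (i + k)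

def numReturns (X : ℕ → Ω → (Fin d → ℤ)) (m : ℕ) (ω : Ω) : ℕ :=
  ((Finset.range m).filter fun s => walk X (s + 1) ω = 0).card

def IsFirstVisit (X : ℕ → Ω → (Fin d → ℤ)) (i : ℕ) (ω : Ω) : Prop :=
  ∀ j < i, walk X j ω ≠ walk X i ω

/-- The walk returns to `0` for the first time at time `k + 1`. -/
def firstReturnAt (X : ℕ → Ω → (Fin d → ℤ)) (k : ℕ) : Set Ω :=
  {ω | walk X (k + 1) ω = 0 ∧ numReturns X k ω = 0}

/-- Only the first `i` steps are meaningful; the later ones are `X 0` by truncated subtraction. -/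
def reverseSteps (X : ℕ → Ω → (Fin d → ℤ)) (i : ℕ) : ℕ → Ω → (Fin d → ℤ) :=
  fun k => X (i - 1 - k)

def initSteps (X : ℕ → Ω → (Fin d → ℤ)) (m : ℕ) (ω : Ω) : Fin m → (Fin d → ℤ) :=
  fun k => X k ω

/-- Events of the walk up to time `m` are preimages under `initSteps X m` of the same events for
this process, which lives on a countable discrete space (so measurability comes for free). -/
def tupleProcess (m : ℕ) : ℕ → (Fin m → (Fin d → ℤ)) → (Fin d → ℤ) :=
  fun k v => if h : k < m then v ⟨k, h⟩ else 0

section Paths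

variable (X : ℕ → Ω → (Fin d → ℤ)) (ω : Ω)

@[simp] lemma walk_zero : walk X 0 ω = 0 := Finset.sum_range_zero _

lemma walk_succ (n : ℕ) : walk X (n + 1) ω = walk X n ω + X n ω := Finset.sum_range_succ _ _

lemma walk_add (i k : ℕ) : walk X (i + k) ω = walk X i ω + walk (shift X i) k ω :=
  Finset.sum_range_add _ _ _

lemma numReturns_eq_sum (m : ℕ) :
    numReturns X m ω = ∑ s ∈ Finset.range m, if walk X (s + 1) ω = 0 then 1 else 0 :=
  Finset.card_filter _ _

lemma numReturns_succ (m : ℕ) :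
    numReturns X (m + 1) ω = numReturns X m ω + if walk X (m + 1) ω = 0 then 1 else 0 := by
  simp only [numReturns_eq_sum, Finset.sum_range_succ]

lemma numReturns_add {a : ℕ} (h : walk X a ω = 0) (m : ℕ) :
    numReturns X (a + m) ω = numReturns X a ω + numReturns (shift X a) m ω := by
  simp only [numReturns_eq_sum, Finset.sum_range_add, add_assoc, walk_add X ω a, h, zero_add]

lemma numReturns_le (m : ℕ) : numReturns X m ω ≤ m :=
  (Finset.card_filter_le _ _).trans (Finset.card_range m).le

lemma numReturns_mono : Monotone fun m => numReturns X m ω := fun _ _ h =>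
  Finset.card_le_card (Finset.filter_subset_filter _ (Finset.range_subset_range.2 h))

lemma numReturns_eq_zero_iff (m : ℕ) :
    numReturns X m ω = 0 ↔ ∀ s < m, walk X (s + 1) ω ≠ 0 := by
  simp [numReturns, Finset.filter_eq_empty_iff]

lemma exists_isFirstVisit (i : ℕ) :
    ∃ j ≤ i, IsFirstVisit X j ω ∧ walk X j ω = walk X i ω := by
  classical
  have hex : ∃ j, walk X j ω = walk X i ω := ⟨i, rfl⟩
  refine ⟨Nat.find hex, Nat.find_min' hex rfl, fun j hj hw => ?_, Nat.find_spec hex⟩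
  exact Nat.find_min hex hj (hw.trans (Nat.find_spec hex))

lemma IsFirstVisit.eq_of_walk_eq {i j : ℕ} (hi : IsFirstVisit X i ω) (hj : IsFirstVisit X j ω)
    (h : walk X i ω = walk X j ω) : i = j := by
  rcases lt_trichotomy i j with hij | rfl | hij
  · exact absurd h (hj i hij)
  · rfl
  · exact absurd h.symm (hi j hij)

lemma localTime_of_isFirstVisit {n i : ℕ} (hi : i ≤ n) (h : IsFirstVisit X i ω) :
    localTime X n (walk X i ω) ω = numReturns (shift X i) (n - i) ω + 1 := by
  have hsplit : n + 1 = i + (n - i + 1) := by omega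
  rw [localTime, Finset.card_filter, hsplit, Finset.sum_range_add, Finset.sum_range_succ',
    Finset.sum_eq_zero fun j hj => if_neg (h j (Finset.mem_range.1 hj)), numReturns_eq_sum]
  simp only [walk_add X ω i, add_eq_left, walk_zero, zero_add, if_true]

lemma Lfun_eq_sum (α : ℝ) (n : ℕ) :
    Lfun X α n ω = ∑ i ∈ Finset.range (n + 1), {ω | IsFirstVisit X i ω}.indicator
      (fun ω => ((numReturns (shift X i) (n - i) ω : ℝ) + 1) ^ α) ω := by
  classical
  have hvisited : visited X n ω =
      ((Finset.range (n + 1)).filter (IsFirstVisit X · ω)).image (walk X · ω) := by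
    refine subset_antisymm (fun x hx => ?_) (Finset.image_subset_image (Finset.filter_subset _ _))
    obtain ⟨i, hi, rfl⟩ := Finset.mem_image.1 hx
    obtain ⟨j, hji, hj, hw⟩ := exists_isFirstVisit X ω i
    exact Finset.mem_image.2 ⟨j, Finset.mem_filter.2
      ⟨Finset.mem_range.2 (hji.trans_lt (Finset.mem_range.1 hi)), hj⟩, hw⟩
  rw [Lfun, hvisited, Finset.sum_image fun i hi j hj => (Finset.mem_filter.1 hi).2.eq_of_walk_eq
    X ω (Finset.mem_filter.1 hj).2, Finset.sum_filter]
  refine Finset.sum_congr rfl fun i hi => ?_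
  by_cases h : IsFirstVisit X i ω
  · rw [if_pos h, Set.indicator_of_mem h,
      localTime_of_isFirstVisit X ω (Nat.lt_succ_iff.1 (Finset.mem_range.1 hi)) h]
    push_cast; rfl
  · rw [if_neg h, Set.indicator_of_notMem h]

lemma walk_reverseSteps {i s : ℕ} (hs : s ≤ i) :
    walk (reverseSteps X i) s ω = walk X i ω - walk X (i - s) ω := by
  induction s with
  | zero => simp
  | succ s ih =>
    have hi : i - s = i - (s + 1) + 1 := by omega
    rw [walk_succ, ih (by omega), hi, walk_succ, reverseSteps,
      show i - 1 - s = i - (s + 1) by omega]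
    abel

lemma isFirstVisit_iff_numReturns_reverseSteps (i : ℕ) :
    IsFirstVisit X i ω ↔ numReturns (reverseSteps X i) i ω = 0 := by
  rw [numReturns_eq_zero_iff]
  constructor
  · intro h s hs
    rw [walk_reverseSteps X ω hs, sub_ne_zero]
    exact (h _ (by omega)).symm
  · intro h j hj
    have := h (i - 1 - j) (by omega)
    rwa [walk_reverseSteps X ω (by omega), sub_ne_zero, show i - (i - 1 - j + 1) = j by omega,
      ne_comm] at this

lemma walk_tupleProcess {m s : ℕ} (hs : s ≤ m) :
    walk (tupleProcess m) s (initSteps X m ω) = walk X s ω :=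
  Finset.sum_congr rfl fun _ ht => dif_pos ((Finset.mem_range.1 ht).trans_le hs)

lemma numReturns_tupleProcess {m k : ℕ} (hk : k ≤ m) :
    numReturns (tupleProcess m) k (initSteps X m ω) = numReturns X k ω := by
  unfold numReturns
  congr 1
  exact Finset.filter_congr fun s hs => by
    rw [walk_tupleProcess X ω (by have := Finset.mem_range.1 hs; omega)]

lemma isFirstVisit_tupleProcess (i : ℕ) :
    IsFirstVisit (tupleProcess i) i (initSteps X i ω) ↔ IsFirstVisit X i ω := by
  simp only [IsFirstVisit, walk_tupleProcess X ω le_rfl]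
  exact forall₂_congr fun j hj => by rw [walk_tupleProcess X ω hj.le]

lemma numReturns_eq_comp_initSteps (m : ℕ) :
    numReturns X m = numReturns (tupleProcess m) m ∘ initSteps X m :=
  funext fun ω => (numReturns_tupleProcess X ω le_rfl).symm

lemma setOf_isFirstVisit_eq_preimage (i : ℕ) :
    {ω | IsFirstVisit X i ω} = initSteps X i ⁻¹' {v | IsFirstVisit (tupleProcess i) i v} :=
  Set.ext fun ω => (isFirstVisit_tupleProcess X ω i).symm

end Paths

section FirstReturn

variable (X : ℕ → Ω → (Fin d → ℤ))

lemma iInter_numReturns_eq_zero :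
    ⋂ i, {ω | numReturns X i ω = 0} = {ω | ∀ n, 1 ≤ n → walk X n ω ≠ 0} := by
  ext ω
  simp only [Set.mem_iInter, Set.mem_ofPred_eq, numReturns_eq_zero_iff]
  refine ⟨fun h n hn => ?_, fun h i s _ => h (s + 1) (Nat.le_add_left 1 s)⟩
  obtain ⟨s, rfl⟩ := Nat.exists_eq_add_of_le' hn
  exact h (s + 1) s (Nat.lt_succ_self s)

lemma monotone_setOf_le_numReturns (j : ℕ) : Monotone fun m => {ω | j ≤ numReturns X m ω} :=
  fun _ _ h ω hω => le_trans hω (numReturns_mono X ω h)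

lemma pairwise_disjoint_firstReturnAt : Pairwise (Disjoint on firstReturnAt X) := by
  have key : ∀ {k l : ℕ}, k < l → Disjoint (firstReturnAt X k) (firstReturnAt X l) :=
    fun hkl => Set.disjoint_left.2 fun ω hk hl =>
      (numReturns_eq_zero_iff X ω _).1 hl.2 _ hkl hk.1
  intro k l hkl
  rcases hkl.lt_or_gt with h | h
  · exact key h
  · exact (key h).symm

lemma exists_mem_firstReturnAt {ω : Ω} {m : ℕ} (h : 0 < numReturns X m ω) :
    ∃ k < m, ω ∈ firstReturnAt X k := by
  classical
  have hex : ∃ s, s < m ∧ walk X (s + 1) ω = 0 := by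
    by_contra! hne
    exact h.ne' ((numReturns_eq_zero_iff X ω m).2 hne)
  refine ⟨Nat.find hex, (Nat.find_spec hex).1, (Nat.find_spec hex).2, ?_⟩
  exact (numReturns_eq_zero_iff X ω _).2 fun s hs hw =>
    Nat.find_min hex hs ⟨hs.trans (Nat.find_spec hex).1, hw⟩

lemma iUnion_firstReturnAt :
    ⋃ k, firstReturnAt X k = {ω | ∀ n, 1 ≤ n → walk X n ω ≠ 0}ᶜ := by
  rw [← iInter_numReturns_eq_zero, Set.compl_iInter]
  ext ω
  simp only [Set.mem_iUnion, Set.mem_compl_iff, Set.mem_ofPred_eq]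
  refine ⟨fun ⟨k, hk⟩ => ⟨k + 1, ?_⟩, fun ⟨i, hi⟩ => ?_⟩
  · rw [numReturns_succ, hk.1, hk.2]
    simp
  · obtain ⟨k, -, hk⟩ := exists_mem_firstReturnAt X (Nat.pos_of_ne_zero hi)
    exact ⟨k, hk⟩

lemma numReturns_of_mem_firstReturnAt {ω : Ω} {k : ℕ} (h : ω ∈ firstReturnAt X k) (m : ℕ) :
    numReturns X (k + 1 + m) ω = numReturns (shift X (k + 1)) m ω + 1 := by
  rw [numReturns_add X ω h.1, numReturns_succ, h.1, h.2]
  simp [add_comm]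

lemma iUnion_succ_le_numReturns (j : ℕ) :
    ⋃ m, {ω | j + 1 ≤ numReturns X m ω} =
      ⋃ k, firstReturnAt X k ∩ ⋃ m, {ω | j ≤ numReturns (shift X (k + 1)) m ω} := by
  ext ω
  simp only [Set.mem_iUnion, Set.mem_inter_iff, Set.mem_ofPred_eq]
  constructor
  · rintro ⟨m, hm⟩
    obtain ⟨k, hkm, hk⟩ := exists_mem_firstReturnAt X (Nat.zero_lt_of_lt hm)
    refine ⟨k, hk, m - (k + 1), ?_⟩
    have := numReturns_of_mem_firstReturnAt X hk (m - (k + 1))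
    rw [show k + 1 + (m - (k + 1)) = m by omega] at this
    omega
  · rintro ⟨k, hk, m, hm⟩
    exact ⟨k + 1 + m, by rw [numReturns_of_mem_firstReturnAt X hk]; omega⟩

lemma firstReturnAt_eq_preimage (k : ℕ) :
    firstReturnAt X k = initSteps X (k + 1) ⁻¹' firstReturnAt (tupleProcess (k + 1)) k := by
  ext ω
  simp only [firstReturnAt, Set.mem_preimage, Set.mem_ofPred_eq, walk_tupleProcess X ω le_rfl,
    numReturns_tupleProcess X ω (Nat.le_succ k)]

end FirstReturn

section Probability

variable [MeasurableSpace Ω] {P : Measure Ω} {X : ℕ → Ω → (Fin d → ℤ)}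

lemma measurable_initSteps (hX : ∀ k, Measurable (X k)) (m : ℕ) : Measurable (initSteps X m) :=
  measurable_pi_lambda _ fun k => hX k

lemma measurableSet_preimage_initSteps (hX : ∀ k, Measurable (X k)) {m : ℕ}
    (A : Set (Fin m → (Fin d → ℤ))) : MeasurableSet (initSteps X m ⁻¹' A) :=
  measurable_initSteps hX m (Set.to_countable A).measurableSet

lemma measurable_numReturns (hX : ∀ k, Measurable (X k)) (m : ℕ) :
    Measurable (numReturns X m) := by
  rw [numReturns_eq_comp_initSteps]
  exact (measurable_of_countable _).comp (measurable_initSteps hX m)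

lemma measurableSet_escape (hX : ∀ k, Measurable (X k)) :
    MeasurableSet {ω | ∀ n, 1 ≤ n → walk X n ω ≠ 0} := by
  rw [← iInter_numReturns_eq_zero]
  exact MeasurableSet.iInter fun i => measurable_numReturns hX i (measurableSet_singleton 0)

lemma integrable_comp_numReturns [IsFiniteMeasure P] (hX : ∀ k, Measurable (X k)) (g : ℕ → ℝ)
    (m : ℕ) : Integrable (fun ω => g (numReturns X m ω)) P :=
  .of_bound ((measurable_of_countable g).comp (measurable_numReturns hX m)).aestronglyMeasurable
    (∑ j ∈ Finset.range (m + 1), ‖g j‖) (ae_of_all _ fun ω =>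
      Finset.single_le_sum (f := fun j => ‖g j‖) (fun _ _ => norm_nonneg _)
        (Finset.mem_range.2 (Nat.lt_succ_of_le (numReturns_le X ω m))))

lemma integral_comp_numReturns [IsFiniteMeasure P] (hX : ∀ k, Measurable (X k)) (g : ℕ → ℝ)
    (m : ℕ) : ∫ ω, g (numReturns X m ω) ∂P = ∑' j, g j * P.real {ω | numReturns X m ω = j} := by
  have hmeas : ∀ j, MeasurableSet {ω | numReturns X m ω = j} := fun j =>
    measurable_numReturns hX m (measurableSet_singleton j)
  have hpt : ∀ ω, g (numReturns X m ω) = ∑ j ∈ Finset.range (m + 1),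
      {ω | numReturns X m ω = j}.indicator (fun _ => g j) ω := fun ω => by
    simp [Set.indicator_apply, Nat.lt_succ_of_le (numReturns_le X ω m)]
  rw [integral_congr_ae (ae_of_all _ hpt),
    integral_finsetSum _ fun j _ => (integrable_const _).indicator (hmeas j),
    tsum_eq_sum (s := Finset.range (m + 1)) fun j hj => ?_]
  · exact Finset.sum_congr rfl fun j _ => by
      rw [integral_indicator_const _ (hmeas j), smul_eq_mul, mul_comm]
  · have hempty : {ω | numReturns X m ω = j} = ∅ := Set.eq_empty_of_forall_notMem fun ω hω =>
      hj (Finset.mem_range.2 (Nat.lt_succ_of_le (hω ▸ numReturns_le X ω m)))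
    rw [hempty, measureReal_empty, mul_zero]

lemma indepFun_initSteps_numReturns_shift (hX : IID P X) (i m : ℕ) :
    IndepFun (initSteps X i) (numReturns (shift X i) m) P := by
  have hdisj : Disjoint (Finset.range i) (Finset.Ico i (i + m)) := by
    rw [Finset.disjoint_left]
    intro k hk hk'
    exact absurd (Finset.mem_range.1 hk) (Finset.mem_Ico.1 hk').1.not_gt
  have h := (hX.2.1.indepFun_finset _ _ hdisj hX.1).comp
    (φ := fun w (k : Fin i) => w ⟨k, by simp⟩)
    (ψ := fun w (k : Fin m) => w ⟨i + k, by simp⟩) (measurable_of_countable _)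
    (measurable_of_countable _)
  rw [numReturns_eq_comp_initSteps]
  exact h.comp measurable_id (measurable_of_countable _)

variable [IsProbabilityMeasure P]

lemma map_comp_steps_eq_pi (hX : IID P X) {m : ℕ} {σ : Fin m → ℕ} (hσ : Injective σ) :
    P.map (fun ω k => X (σ k) ω) = Measure.pi fun _ => P.map (X 0) := by
  rw [(iIndepFun_iff_map_fun_eq_pi_map fun k => (hX.1 (σ k)).aemeasurable).1 (hX.2.1.precomp hσ)]
  simp_rw [(hX.2.2 _).map_eq]

lemma identDistrib_comp_steps (hX : IID P X) {m : ℕ} {σ : Fin m → ℕ} (hσ : Injective σ) :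
    IdentDistrib (fun ω k => X (σ k) ω) (initSteps X m) P P where
  aemeasurable_fst := (measurable_pi_lambda _ fun k => hX.1 (σ k)).aemeasurable
  aemeasurable_snd := (measurable_initSteps hX.1 m).aemeasurable
  map_eq := by rw [map_comp_steps_eq_pi hX hσ, ← map_comp_steps_eq_pi hX Fin.val_injective]; rfl

lemma identDistrib_numReturns (hX : IID P X) {m : ℕ} {σ : Fin m → ℕ} (hσ : Injective σ)
    (Y : ℕ → Ω → (Fin d → ℤ)) (hY : initSteps Y m = fun ω k => X (σ k) ω) :
    IdentDistrib (numReturns Y m) (numReturns X m) P P := by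
  rw [numReturns_eq_comp_initSteps Y, numReturns_eq_comp_initSteps X, hY]
  exact (identDistrib_comp_steps hX hσ).comp (measurable_of_countable _)

lemma identDistrib_numReturns_shift (hX : IID P X) (i m : ℕ) :
    IdentDistrib (numReturns (shift X i) m) (numReturns X m) P P :=
  identDistrib_numReturns hX (σ := fun k : Fin m => i + k)
    (fun _ _ h => Fin.ext (Nat.add_left_cancel h)) _ rfl

lemma integral_indicator_comp_numReturns_shift (hX : IID P X) {i : ℕ}
    (A : Set (Fin i → (Fin d → ℤ))) (g : ℕ → ℝ) (m : ℕ) :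
    ∫ ω, (initSteps X i ⁻¹' A).indicator (fun ω => g (numReturns (shift X i) m ω)) ω ∂P =
      P.real (initSteps X i ⁻¹' A) * ∫ ω, g (numReturns X m ω) ∂P := by
  have hprod : (initSteps X i ⁻¹' A).indicator (fun ω => g (numReturns (shift X i) m ω)) =
      (A.indicator 1 ∘ initSteps X i) * (g ∘ numReturns (shift X i) m) := by
    ext ω
    by_cases h : initSteps X i ω ∈ A <;> simp [h]
  have hA : A.indicator 1 ∘ initSteps X i = (initSteps X i ⁻¹' A).indicator (1 : Ω → ℝ) :=
    funext fun ω => (Set.indicator_comp_right (g := (1 : (Fin i → (Fin d → ℤ)) → ℝ)) _).symm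
  rw [hprod, (indepFun_initSteps_numReturns_shift hX i m).integral_comp_mul_comp
      (measurable_initSteps hX.1 i).aemeasurable
      (measurable_numReturns (fun _ => hX.1 _) m).aemeasurable
      (measurable_of_countable _).aestronglyMeasurable
      (measurable_of_countable _).aestronglyMeasurable,
    hA, integral_indicator_one (measurableSet_preimage_initSteps hX.1 A)]
  exact congrArg _
    ((identDistrib_numReturns_shift hX i m).comp (measurable_of_countable g)).integral_eq

lemma integral_Lfun (hX : IID P X) (α : ℝ) (n : ℕ) :
    ∫ ω, Lfun X α n ω ∂P = ∑ i ∈ Finset.range (n + 1),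
      P.real {ω | IsFirstVisit X i ω} * ∫ ω, ((numReturns X (n - i) ω : ℝ) + 1) ^ α ∂P := by
  simp_rw [Lfun_eq_sum X _ α n]
  rw [integral_finsetSum]
  · refine Finset.sum_congr rfl fun i _ => ?_
    rw [setOf_isFirstVisit_eq_preimage X i]
    exact integral_indicator_comp_numReturns_shift hX _ (fun j => ((j : ℝ) + 1) ^ α) (n - i)
  · intro i _
    rw [setOf_isFirstVisit_eq_preimage X i]
    exact (integrable_comp_numReturns (fun _ => hX.1 _) (fun j => ((j : ℝ) + 1) ^ α) _).indicator
      (measurableSet_preimage_initSteps hX.1 _)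

lemma measureReal_isFirstVisit (hX : IID P X) (i : ℕ) :
    P.real {ω | IsFirstVisit X i ω} = P.real {ω | numReturns X i ω = 0} := by
  simp_rw [isFirstVisit_iff_numReturns_reverseSteps X]
  have hσ : Injective fun k : Fin i => i - 1 - k := fun a b h => by
    have := a.isLt; have := b.isLt; simp only at h; exact Fin.ext (by omega)
  exact congrArg ENNReal.toReal
    ((identDistrib_numReturns hX hσ (reverseSteps X i) rfl).measure_mem_eq
      (measurableSet_singleton 0))

lemma tendsto_measureReal_isFirstVisit (hX : IID P X) :
    Tendsto (fun i => P.real {ω | IsFirstVisit X i ω}) atTop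
      (𝓝 (P.real {ω | ∀ n, 1 ≤ n → walk X n ω ≠ 0})) := by
  simp_rw [measureReal_isFirstVisit hX, measureReal_def, ← iInter_numReturns_eq_zero]
  refine (ENNReal.tendsto_toReal (measure_ne_top _ _)).comp (tendsto_measure_iInter_atTop
    (fun i => (measurable_numReturns hX.1 i (measurableSet_singleton 0)).nullMeasurableSet)
    (fun i j hij ω hω => ?_) ⟨0, measure_ne_top _ _⟩)
  exact Nat.eq_zero_of_le_zero ((numReturns_mono X ω hij).trans_eq hω)

lemma measure_firstReturnAt_inter (hX : IID P X) (j k : ℕ) :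
    P (firstReturnAt X k ∩ ⋃ m, {ω | j ≤ numReturns (shift X (k + 1)) m ω}) =
      P (firstReturnAt X k) * P (⋃ m, {ω | j ≤ numReturns X m ω}) := by
  rw [Set.inter_iUnion, Monotone.measure_iUnion fun m m' h =>
      Set.inter_subset_inter_right _ (monotone_setOf_le_numReturns _ j h),
    Monotone.measure_iUnion (monotone_setOf_le_numReturns X j), ENNReal.mul_iSup]
  refine iSup_congr fun m => ?_
  rw [firstReturnAt_eq_preimage X k]
  exact ((indepFun_initSteps_numReturns_shift hX (k + 1) m).measure_inter_preimage_eq_mul _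
      {n | j ≤ n} (Set.to_countable _).measurableSet (Set.to_countable _).measurableSet).trans
    (congrArg _ ((identDistrib_numReturns_shift hX (k + 1) m).measure_mem_eq
      (Set.to_countable _).measurableSet))

lemma measure_iUnion_le_numReturns (hX : IID P X) (j : ℕ) :
    P (⋃ m, {ω | j ≤ numReturns X m ω}) = P {ω | ∀ n, 1 ≤ n → walk X n ω ≠ 0}ᶜ ^ j := by
  have hmeas : ∀ k, MeasurableSet (firstReturnAt X k) := fun k => by
    rw [firstReturnAt_eq_preimage X k]
    exact measurableSet_preimage_initSteps hX.1 _
  induction j with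
  | zero => simp [Set.iUnion_const]
  | succ j ih =>
    have hmeas' : ∀ k, MeasurableSet
        (firstReturnAt X k ∩ ⋃ m, {ω | j ≤ numReturns (shift X (k + 1)) m ω}) := fun k =>
      (hmeas k).inter (MeasurableSet.iUnion fun m => measurable_numReturns (fun _ => hX.1 _) m
        (Set.to_countable {n | j ≤ n}).measurableSet)
    rw [iUnion_succ_le_numReturns, measure_iUnion ((pairwise_disjoint_firstReturnAt X).mono
        fun k l h => h.mono Set.inter_subset_left Set.inter_subset_left) hmeas']
    simp_rw [measure_firstReturnAt_inter hX j, ENNReal.tsum_mul_right, ih]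
    rw [← measure_iUnion (pairwise_disjoint_firstReturnAt X) hmeas, iUnion_firstReturnAt,
      pow_succ']

variable {γ : ℝ}

lemma measureReal_iUnion_le_numReturns (hX : IID P X)
    (hγ : P.real {ω | ∀ n, 1 ≤ n → walk X n ω ≠ 0} = γ) (j : ℕ) :
    P.real (⋃ m, {ω | j ≤ numReturns X m ω}) = (1 - γ) ^ j := by
  rw [measureReal_def, measure_iUnion_le_numReturns hX, ENNReal.toReal_pow, ← measureReal_def,
    probReal_compl_eq_one_sub (measurableSet_escape hX.1), hγ]

lemma tendsto_measureReal_le_numReturns (hX : IID P X)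
    (hγ : P.real {ω | ∀ n, 1 ≤ n → walk X n ω ≠ 0} = γ) (j : ℕ) :
    Tendsto (fun m => P.real {ω | j ≤ numReturns X m ω}) atTop (𝓝 ((1 - γ) ^ j)) := by
  rw [← measureReal_iUnion_le_numReturns hX hγ j]
  exact (ENNReal.tendsto_toReal (measure_ne_top _ _)).comp
    (tendsto_measure_iUnion_atTop (monotone_setOf_le_numReturns X j))

lemma tendsto_measureReal_numReturns_eq (hX : IID P X)
    (hγ : P.real {ω | ∀ n, 1 ≤ n → walk X n ω ≠ 0} = γ) (j : ℕ) :
    Tendsto (fun m => P.real {ω | numReturns X m ω = j}) atTop (𝓝 (γ * (1 - γ) ^ j)) := by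
  have hsplit : ∀ m, P.real {ω | numReturns X m ω = j} =
      P.real {ω | j ≤ numReturns X m ω} - P.real {ω | j + 1 ≤ numReturns X m ω} := fun m => by
    rw [eq_sub_iff_add_eq, ← measureReal_union (Set.disjoint_left.2 fun ω h h' => by
        simp only [Set.mem_ofPred_eq] at h h'; omega)
      (show MeasurableSet {ω | j + 1 ≤ numReturns X m ω} from
        measurable_numReturns hX.1 m (Set.to_countable {n | j + 1 ≤ n}).measurableSet)]
    congr 1
    ext ω
    simp only [Set.mem_union, Set.mem_ofPred_eq]
    omega
  simp_rw [hsplit]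
  convert (tendsto_measureReal_le_numReturns hX hγ j).sub
    (tendsto_measureReal_le_numReturns hX hγ (j + 1)) using 2
  ring

lemma tendsto_integral_comp_numReturns (hX : IID P X)
    (hγ : P.real {ω | ∀ n, 1 ≤ n → walk X n ω ≠ 0} = γ) {g : ℕ → ℝ}
    (hg : Summable fun j => ‖g j‖ * (1 - γ) ^ j) :
    Tendsto (fun m => ∫ ω, g (numReturns X m ω) ∂P) atTop
      (𝓝 (∑' j, g j * (γ * (1 - γ) ^ j))) := by
  simp_rw [integral_comp_numReturns hX.1 g]
  refine tendsto_tsum_of_dominated_convergence hg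
    (fun j => (tendsto_measureReal_numReturns_eq hX hγ j).const_mul (g j))
    (Eventually.of_forall fun m j => ?_)
  rw [norm_mul, Real.norm_of_nonneg measureReal_nonneg,
    ← measureReal_iUnion_le_numReturns hX hγ j]
  refine mul_le_mul_of_nonneg_left (measureReal_mono fun ω hω => ?_) (norm_nonneg _)
  exact Set.mem_iUnion.2 ⟨m, (show numReturns X m ω = j from hω).ge⟩

end Probability

end RandomWalk

theorem statement5_general {Ω : Type*} [MeasurableSpace Ω] (P : Measure Ω) [IsProbabilityMeasure P]
    {d : ℕ} (X : ℕ → Ω → (Fin d → ℤ)) (hiid : IID P X) (γ : ℝ)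
    (hγ : (P {ω | ∀ n, 1 ≤ n → walk X n ω ≠ 0}).toReal = γ)
    (hγ0 : 0 < γ) (α : ℝ) :
    Tendsto (fun n : ℕ => (∫ ω, Lfun X α n ω ∂P) / n) atTop
      (𝓝 (∑' j : ℕ, ((j : ℝ) + 1) ^ α * γ ^ 2 * (1 - γ) ^ j)) := by
  rw [← measureReal_def] at hγ
  have hγ1 : γ ≤ 1 := hγ ▸ measureReal_le_one
  have hsummable : Summable fun j : ℕ => ‖((j : ℝ) + 1) ^ α‖ * (1 - γ) ^ j := by
    simpa [abs_of_nonneg (Real.rpow_nonneg (Nat.cast_add_one_pos _).le α)] using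
      RandomWalk.summable_add_one_rpow_mul_geometric α (sub_nonneg.2 hγ1) (by linarith)
  have hlimit : ∑' j : ℕ, ((j : ℝ) + 1) ^ α * γ ^ 2 * (1 - γ) ^ j =
      γ * ∑' j : ℕ, ((j : ℝ) + 1) ^ α * (γ * (1 - γ) ^ j) := by
    rw [← tsum_mul_left]
    exact tsum_congr fun j => by ring
  rw [hlimit]
  exact (RandomWalk.tendsto_sum_mul_sub_div
    (hγ ▸ RandomWalk.tendsto_measureReal_isFirstVisit hiid)
    (RandomWalk.tendsto_integral_comp_numReturns hiid hγ hsummable)).congr fun n => by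
      rw [RandomWalk.integral_Lfun hiid α n]

/-- **Asymptotics of the expected value `E(L_n(α))`.** -/
theorem statement5 {Ω : Type*} [MeasurableSpace Ω] (P : Measure Ω) [IsProbabilityMeasure P]
    {d : ℕ} (X : ℕ → Ω → (Fin d → ℤ)) (hiid : IID P X) (γ : ℝ)
    (hγ : (P {ω | ∀ n, 1 ≤ n → walk X n ω ≠ 0}).toReal = γ)
    (hγ0 : 0 < γ) (hγ1 : γ < 1) (α : ℝ) (hα : 0 ≤ α) :
    Tendsto (fun n : ℕ => (∫ ω, Lfun X α n ω ∂P) / n) atTop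
      (𝓝 (∑' j : ℕ, ((j : ℝ) + 1) ^ α * γ ^ 2 * (1 - γ) ^ j)) :=
  statement5_general P X hiid γ hγ hγ0 α
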